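/- Let k > 0, 0 < c < 2√k, ω_d = √(k − c²/4), T̄ > 0. There exists a constant K > 0, depending only on c, k and T̄, such that for every continuous F : [0, T̄] → ℝ, the function x(t) = d(t)∫₀ᵗ F(τ)(d(τ) − (c/2)s(τ)) dτ + s(t)∫₀ᵗ F(τ)((c/2)d(τ) + ω_d² s(τ)) dτ, with d(t) = e^{−ct/2} cos(ω_d t) and s(t) = (1/ω_d) e^{−ct/2} sin(ω_d t), has derivative satisfying (∫₀^{T̄} ẋ(t)² dt)^{1/2} ≤ K ( (∫₀^{T̄} x(t)² dt)^{1/2} + (∫₀^{T̄} e^{−2ct} F(t)² dt)^{1/2} ). -/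

import Mathlib

/-!
Differentiating `x = d A + s B` with `A, B` the two primitives gives
`ẋ = d' A + s' B + e^{-ct} F`, since `d (d - c s / 2) + s (c d / 2 + ω² s) = d² + ω² s² = e^{-ct}`.
Moreover `d' = -(c d / 2 + ω² s)` and `s' = d - c s / 2` are, up to sign, the kernels of `B` and
`A`, so one compactness bound on `[0, T]` gives `|ẋ t| ≤ M ∫₀ᵀ e^{-cτ} |F| + e^{-ct} |F t|`, and
Cauchy–Schwarz turns this into `‖ẋ‖₂ ≤ K ‖e^{-c·} F‖₂`.
-/

open Real Set MeasureTheory intervalIntegral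

section IntervalEstimates

variable {a b : ℝ} {f g : ℝ → ℝ}

theorem sq_integral_abs_le (hab : a ≤ b) (hf : ContinuousOn f (Icc a b)) :
    (∫ t in a..b, |f t|) ^ 2 ≤ (b - a) * ∫ t in a..b, f t ^ 2 := by
  rcases hab.eq_or_lt with rfl | hlt
  · simp
  set I := ∫ t in a..b, |f t|
  set m := I / (b - a)
  -- integrate `2 m |f| - m² ≤ f²` and optimise over `m`
  have key : 2 * m * I - m ^ 2 * (b - a) ≤ ∫ t in a..b, f t ^ 2 := by
    have hint : ∫ t in a..b, (2 * m * |f t| - m ^ 2) = 2 * m * I - m ^ 2 * (b - a) := by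
      rw [integral_sub ((hf.abs.intervalIntegrable_of_Icc hab).const_mul _)
        intervalIntegrable_const, intervalIntegral.integral_const_mul,
        intervalIntegral.integral_const, smul_eq_mul]
      ring
    rw [← hint]
    refine integral_mono_on hab
      (((hf.abs.intervalIntegrable_of_Icc hab).const_mul _).sub intervalIntegrable_const)
      ((hf.pow 2).intervalIntegrable_of_Icc hab) fun t _ => ?_
    nlinarith [sq_nonneg (|f t| - m), sq_abs (f t)]
  have hm : 2 * m * I - m ^ 2 * (b - a) = I ^ 2 / (b - a) := by
    simp only [m]
    field_simp
    ring
  rwa [hm, div_le_iff₀ (sub_pos.2 hlt), mul_comm] at key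

theorem abs_integral_le_integral_of_abs_le {t : ℝ} (hg : IntervalIntegrable g volume a b)
    (ht : t ∈ Icc a b) (hfg : ∀ τ ∈ Icc a b, |f τ| ≤ g τ) :
    |∫ τ in a..t, f τ| ≤ ∫ τ in a..b, g τ :=
  calc |∫ τ in a..t, f τ| ≤ ∫ τ in a..t, g τ := by
        rw [← Real.norm_eq_abs]
        exact norm_integral_le_of_norm_le ht.1
          (ae_of_all _ fun τ hτ => hfg τ ⟨hτ.1.le, hτ.2.trans ht.2⟩)
          (hg.mono_set (uIcc_subset_uIcc_left (mem_uIcc_of_le ht.1 ht.2)))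
    _ ≤ ∫ τ in a..b, g τ :=
        integral_mono_interval le_rfl ht.1 ht.2
          ((ae_restrict_iff' measurableSet_Ioc).2 (ae_of_all _ fun τ hτ =>
            (abs_nonneg _).trans (hfg τ (Ioc_subset_Icc_self hτ)))) hg

theorem integral_sq_le_of_abs_le_add {u : ℝ → ℝ} {P : ℝ} (hab : a ≤ b)
    (hg : ContinuousOn g (Icc a b)) (hu : ∀ t ∈ Ioo a b, |u t| ≤ P + |g t|) :
    ∫ t in a..b, u t ^ 2 ≤ 2 * (P ^ 2 * (b - a) + ∫ t in a..b, g t ^ 2) := by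
  have hle : ∀ᵐ t, t ∈ Ioc a b → ‖u t ^ 2‖ ≤ 2 * (P ^ 2 + g t ^ 2) := by
    filter_upwards [volume.ae_ne b] with t htb ht
    have hut := hu t ⟨ht.1, ht.2.lt_of_ne htb⟩
    rw [Real.norm_eq_abs, abs_sq]
    nlinarith [abs_nonneg (u t), sq_abs (u t), sq_abs (g t), sq_nonneg (P - |g t|)]
  have hg2 : IntervalIntegrable (fun t => g t ^ 2) volume a b :=
    (hg.pow 2).intervalIntegrable_of_Icc hab
  calc ∫ t in a..b, u t ^ 2 ≤ ‖∫ t in a..b, u t ^ 2‖ := Real.le_norm_self _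
    _ ≤ ∫ t in a..b, 2 * (P ^ 2 + g t ^ 2) :=
        norm_integral_le_of_norm_le hab hle ((intervalIntegrable_const.add hg2).const_mul 2)
    _ = 2 * (P ^ 2 * (b - a) + ∫ t in a..b, g t ^ 2) := by
        rw [intervalIntegral.integral_const_mul, integral_add intervalIntegrable_const hg2,
          intervalIntegral.integral_const, smul_eq_mul, mul_comm (b - a)]

theorem sqrt_integral_sq_le_of_abs_le {u : ℝ → ℝ} {M : ℝ} (hab : a ≤ b)
    (hg : ContinuousOn g (Icc a b))
    (hu : ∀ t ∈ Ioo a b, |u t| ≤ M * (∫ τ in a..b, |g τ|) + |g t|) :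
    √(∫ t in a..b, u t ^ 2) ≤ √(2 * (M ^ 2 * (b - a) ^ 2 + 1)) * √(∫ t in a..b, g t ^ 2) := by
  rw [← Real.sqrt_mul (by positivity)]
  refine Real.sqrt_le_sqrt ((integral_sq_le_of_abs_le_add hab hg hu).trans ?_)
  have hCS := mul_le_mul_of_nonneg_left (sq_integral_abs_le hab hg)
    (by nlinarith [sub_nonneg.2 hab] : 0 ≤ M ^ 2 * (b - a))
  nlinarith

theorem hasDerivAt_integral_of_continuousOn {t : ℝ} (hg : ContinuousOn g (Icc a b))
    (ht : t ∈ Ioo a b) : HasDerivAt (fun u => ∫ τ in a..u, g τ) (g t) t :=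
  integral_hasDerivAt_right
    ((hg.mono (Icc_subset_Icc le_rfl ht.2.le)).intervalIntegrable_of_Icc ht.1.le)
    ((hg.mono Ioo_subset_Icc_self).stronglyMeasurableAtFilter isOpen_Ioo t ht)
    (hg.continuousAt (Icc_mem_nhds ht.1 ht.2))

end IntervalEstimates

section DampedOscillator

noncomputable def dampedCos (c ω t : ℝ) : ℝ := exp (-c * t / 2) * cos (ω * t)

noncomputable def dampedSin (c ω t : ℝ) : ℝ := 1 / ω * exp (-c * t / 2) * sin (ω * t)

noncomputable def duhamel (c ω : ℝ) (F : ℝ → ℝ) (t : ℝ) : ℝ :=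
  dampedCos c ω t * (∫ τ in (0:ℝ)..t, F τ * (dampedCos c ω τ - c / 2 * dampedSin c ω τ))
    + dampedSin c ω t
      * ∫ τ in (0:ℝ)..t, F τ * (c / 2 * dampedCos c ω τ + ω ^ 2 * dampedSin c ω τ)

variable {c ω : ℝ}

@[fun_prop]
theorem continuous_dampedCos : Continuous (dampedCos c ω) := by
  unfold dampedCos; fun_prop

@[fun_prop]
theorem continuous_dampedSin : Continuous (dampedSin c ω) := by
  unfold dampedSin; fun_prop

theorem hasDerivAt_exp_neg_mul_div_two (t : ℝ) :
    HasDerivAt (fun u => exp (-c * u / 2)) (-(c / 2) * exp (-c * t / 2)) t := by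
  simpa [mul_comm, neg_div] using (((hasDerivAt_id t).const_mul (-c)).div_const 2).exp

theorem hasDerivAt_dampedCos (t : ℝ) :
    HasDerivAt (dampedCos c ω) (-(c / 2 * dampedCos c ω t + ω ^ 2 * dampedSin c ω t)) t := by
  refine ((hasDerivAt_exp_neg_mul_div_two t).mul
    (hasDerivAt_const_mul ω).cos).congr_deriv ?_
  unfold dampedCos dampedSin
  field_simp
  ring

theorem hasDerivAt_dampedSin (hω : ω ≠ 0) (t : ℝ) :
    HasDerivAt (dampedSin c ω) (dampedCos c ω t - c / 2 * dampedSin c ω t) t := by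
  refine (((hasDerivAt_exp_neg_mul_div_two t).const_mul (1 / ω)).mul
    (hasDerivAt_const_mul ω).sin).congr_deriv ?_
  unfold dampedCos dampedSin
  field_simp
  ring

theorem dampedCos_mul_add_dampedSin_mul (hω : ω ≠ 0) (t : ℝ) :
    dampedCos c ω t * (dampedCos c ω t - c / 2 * dampedSin c ω t)
      + dampedSin c ω t * (c / 2 * dampedCos c ω t + ω ^ 2 * dampedSin c ω t)
      = exp (-c * t) := by
  unfold dampedCos dampedSin
  have hinv : ω * (1 / ω) = 1 := mul_one_div_cancel hω
  have hexp : exp (-c * t / 2) ^ 2 = exp (-c * t) := by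
    rw [← exp_nat_mul]; ring_nf
  linear_combination exp (-c * t / 2) ^ 2 * cos_sq_add_sin_sq (ω * t)
    + exp (-c * t / 2) ^ 2 * sin (ω * t) ^ 2 * (ω * (1 / ω) + 1) * hinv + hexp

theorem hasDerivAt_duhamel {F : ℝ → ℝ} {T t : ℝ} (hω : ω ≠ 0) (hF : ContinuousOn F (Icc 0 T))
    (ht : t ∈ Ioo 0 T) :
    HasDerivAt (duhamel c ω F)
      (-(c / 2 * dampedCos c ω t + ω ^ 2 * dampedSin c ω t)
          * (∫ τ in (0:ℝ)..t, F τ * (dampedCos c ω τ - c / 2 * dampedSin c ω τ))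
        + (dampedCos c ω t - c / 2 * dampedSin c ω t)
          * (∫ τ in (0:ℝ)..t, F τ * (c / 2 * dampedCos c ω τ + ω ^ 2 * dampedSin c ω τ))
        + exp (-c * t) * F t) t := by
  have hA := hasDerivAt_integral_of_continuousOn
    (g := fun τ => F τ * (dampedCos c ω τ - c / 2 * dampedSin c ω τ)) (hF.mul (by fun_prop)) ht
  have hB := hasDerivAt_integral_of_continuousOn
    (g := fun τ => F τ * (c / 2 * dampedCos c ω τ + ω ^ 2 * dampedSin c ω τ))
    (hF.mul (by fun_prop)) ht
  refine (((hasDerivAt_dampedCos t).mul hA).add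
    ((hasDerivAt_dampedSin hω t).mul hB)).congr_deriv ?_
  linear_combination F t * dampedCos_mul_add_dampedSin_mul hω t

theorem exists_abs_deriv_duhamel_le (hc : 0 ≤ c) (hω : ω ≠ 0) (T : ℝ) :
    ∃ M, ∀ F : ℝ → ℝ, ContinuousOn F (Icc 0 T) → ∀ t ∈ Ioo 0 T,
      |deriv (duhamel c ω F) t|
        ≤ M * (∫ τ in (0:ℝ)..T, |exp (-c * τ) * F τ|) + |exp (-c * t) * F t| := by
  obtain ⟨M, hM⟩ := isCompact_Icc.exists_bound_of_continuousOn (s := Icc 0 T)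
    (f := fun τ => (exp (c * τ) * (dampedCos c ω τ - c / 2 * dampedSin c ω τ),
      exp (c * τ) * (c / 2 * dampedCos c ω τ + ω ^ 2 * dampedSin c ω τ))) (by fun_prop)
  refine ⟨2 * M ^ 2, fun F hF t ht => ?_⟩
  have hG : IntervalIntegrable (fun τ => |exp (-c * τ) * F τ|) volume 0 T :=
    (((continuous_exp.comp (continuous_const_mul (-c))).continuousOn.mul hF).abs
      ).intervalIntegrable_of_Icc (ht.1.trans ht.2).le
  have kernel_bound : ∀ κ : ℝ → ℝ, (∀ τ ∈ Icc 0 T, |exp (c * τ) * κ τ| ≤ M) →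
      |κ t| ≤ M ∧ |∫ τ in (0:ℝ)..t, F τ * κ τ| ≤ M * ∫ τ in (0:ℝ)..T, |exp (-c * τ) * F τ| := by
    intro κ hκ
    constructor
    · calc |κ t| ≤ exp (c * t) * |κ t| :=
            le_mul_of_one_le_left (abs_nonneg _) (one_le_exp (mul_nonneg hc ht.1.le))
        _ = |exp (c * t) * κ t| := by rw [abs_mul, abs_of_pos (exp_pos _)]
        _ ≤ M := hκ t (Ioo_subset_Icc_self ht)
    · rw [← intervalIntegral.integral_const_mul]
      refine abs_integral_le_integral_of_abs_le (hG.const_mul M) (Ioo_subset_Icc_self ht)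
        fun τ hτ => ?_
      have hexp : exp (c * τ) * exp (-c * τ) = 1 := by rw [← exp_add]; simp
      calc |F τ * κ τ| = |exp (c * τ) * κ τ| * |exp (-c * τ) * F τ| := by
            rw [← abs_mul]
            congr 1
            linear_combination -(F τ * κ τ) * hexp
        _ ≤ M * |exp (-c * τ) * F τ| := mul_le_mul_of_nonneg_right (hκ τ hτ) (abs_nonneg _)
  obtain ⟨hκ₁, hA⟩ := kernel_bound _ fun τ hτ => (norm_fst_le _).trans (hM τ hτ)
  obtain ⟨hκ₂, hB⟩ := kernel_bound _ fun τ hτ => (norm_snd_le _).trans (hM τ hτ)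
  have hM₀ : 0 ≤ M := (abs_nonneg _).trans hκ₁
  rw [(hasDerivAt_duhamel hω hF ht).deriv]
  refine (abs_add_three _ _ _).trans ?_
  rw [abs_mul, abs_mul, abs_neg]
  set I := ∫ τ in (0:ℝ)..T, |exp (-c * τ) * F τ|
  calc _ ≤ M * (M * I) + M * (M * I) + |exp (-c * t) * F t| := by gcongr
    _ = 2 * M ^ 2 * I + |exp (-c * t) * F t| := by ring

end DampedOscillator

theorem stmt11_general (k c : ℝ) (hc0 : 0 < c) (hc : c < 2 * Real.sqrt k)
    (ωd : ℝ) (hωd : ωd = Real.sqrt (k - c ^ 2 / 4))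
    (T : ℝ) (hT : 0 < T)
    (d s : ℝ → ℝ)
    (hd : d = fun t => Real.exp (-c * t / 2) * Real.cos (ωd * t))
    (hs : s = fun t => (1 / ωd) * Real.exp (-c * t / 2) * Real.sin (ωd * t)) :
    ∃ K : ℝ, 0 < K ∧
      ∀ F : ℝ → ℝ, ContinuousOn F (Set.Icc 0 T) →
        ∀ x : ℝ → ℝ,
          x = (fun t =>
            d t * (∫ τ in (0:ℝ)..t, F τ * (d τ - (c / 2) * s τ))
            + s t * ∫ τ in (0:ℝ)..t, F τ * ((c / 2) * d τ + ωd ^ 2 * s τ)) →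
          Real.sqrt (∫ t in (0:ℝ)..T, (deriv x t) ^ 2) ≤
            K * (Real.sqrt (∫ t in (0:ℝ)..T, x t ^ 2) +
                 Real.sqrt (∫ t in (0:ℝ)..T, Real.exp (-2 * c * t) * F t ^ 2)) := by
  have hω : ωd ≠ 0 := by
    have hck : (c / 2) ^ 2 < k := (Real.lt_sqrt (by positivity)).1 (by linarith)
    exact hωd ▸ (Real.sqrt_pos.2 (by linarith)).ne'
  obtain rfl : d = dampedCos c ωd := hd
  obtain rfl : s = dampedSin c ωd := hs
  obtain ⟨M, hM⟩ := exists_abs_deriv_duhamel_le hc0.le hω T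
  refine ⟨√(2 * (M ^ 2 * T ^ 2 + 1)), by positivity, fun F hF x hx => ?_⟩
  obtain rfl : x = duhamel c ωd F := hx
  have hG : ContinuousOn (fun t => exp (-c * t) * F t) (Icc 0 T) :=
    (continuous_exp.comp (continuous_const_mul (-c))).continuousOn.mul hF
  have hL2 := sqrt_integral_sq_le_of_abs_le hT.le hG (hM F hF)
  have hweight : ∀ t, (exp (-c * t) * F t) ^ 2 = exp (-2 * c * t) * F t ^ 2 := fun t => by
    rw [mul_pow, ← exp_nat_mul]
    ring_nf
  simp only [hweight, sub_zero] at hL2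
  exact hL2.trans (mul_le_mul_of_nonneg_left (le_add_of_nonneg_left (sqrt_nonneg _))
    (sqrt_nonneg _))

/-- L² bound on the velocity. There is `K > 0` (depending only on `c`, `k`,
`T̄`) such that for all continuous `F`, the Duhamel solution
`x(t) = d(t)∫₀ᵗ F(d − (c/2)s) + s(t)∫₀ᵗ F((c/2)d + ω_d²s)` satisfies
`‖ẋ‖_{L²(0,T̄)} ≤ K(‖x‖_{L²(0,T̄)} + ‖e^{-c·}F‖_{L²(0,T̄)})`. -/
theorem stmt11 (k c : ℝ) (hk : 0 < k) (hc0 : 0 < c) (hc : c < 2 * Real.sqrt k)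
    (ωd : ℝ) (hωd : ωd = Real.sqrt (k - c ^ 2 / 4))
    (T : ℝ) (hT : 0 < T)
    (d s : ℝ → ℝ)
    (hd : d = fun t => Real.exp (-c * t / 2) * Real.cos (ωd * t))
    (hs : s = fun t => (1 / ωd) * Real.exp (-c * t / 2) * Real.sin (ωd * t)) :
    ∃ K : ℝ, 0 < K ∧
      ∀ F : ℝ → ℝ, ContinuousOn F (Set.Icc 0 T) →
        ∀ x : ℝ → ℝ,
          x = (fun t =>
            d t * (∫ τ in (0:ℝ)..t, F τ * (d τ - (c / 2) * s τ))
            + s t * ∫ τ in (0:ℝ)..t, F τ * ((c / 2) * d τ + ωd ^ 2 * s τ)) →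
          Real.sqrt (∫ t in (0:ℝ)..T, (deriv x t) ^ 2) ≤
            K * (Real.sqrt (∫ t in (0:ℝ)..T, x t ^ 2) +
                 Real.sqrt (∫ t in (0:ℝ)..T, Real.exp (-2 * c * t) * F t ^ 2)) :=
  stmt11_general k c hc0 hc ωd hωd T hT d s hd hs
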